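/- Let L be a resolvent positive linear operator on the space of real symmetric n×n matrices, and let T > 0. Suppose Y : [0,T] → (symmetric n×n real matrices) is differentiable, Y(0) is positive definite, and for every t ∈ [0,T] the matrix Y'(t) − L(Y(t)) is positive definite. Then Y(t) is positive definite for every t ∈ [0,T]. -/

import Mathlib

/-!
Suppose `Y` fails to be positive definite somewhere, and let `t₁` be the first such time; it
exists because positivity of `u ↦ uᵀ Y(t) u` on the (compact) unit sphere is an open condition
in `t`. Then `Y(t₁)` is positive semidefinite and `vᵀ Y(t₁) v = 0` for some unit vector `v`, so
`r ↦ vᵀ Y(r) v` attains its minimum over `[0, t₁]` at `t₁` and `vᵀ Y'(t₁) v ≤ 0`.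
Resolvent positivity makes `L` cross-positive: `vᵀ L(X) v ≥ 0` whenever `X ⪰ 0` and
`vᵀ X v = 0`, because `α (α - L)⁻¹ X` is positive semidefinite and tends to `X` as `α → ∞`.
Hence `vᵀ Y'(t₁) v > vᵀ L(Y(t₁)) v ≥ 0`, a contradiction.
-/

open Matrix Set

/-- A linear operator `L` on real `n × n` matrices, mapping symmetric matrices to symmetric
matrices, is *resolvent positive* if there is `α₀ ∈ ℝ` such that for every `α > α₀` the
operator `α • id - L`, restricted to symmetric matrices, is bijective and its inverse maps
every symmetric positive semidefinite matrix to a symmetric positive semidefinite matrix. -/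
def ResolventPositive {n : ℕ} (L : Matrix (Fin n) (Fin n) ℝ → Matrix (Fin n) (Fin n) ℝ) : Prop :=
  ∃ α₀ : ℝ, ∀ α : ℝ, α₀ < α →
    (∀ Y : Matrix (Fin n) (Fin n) ℝ, Y.IsSymm →
      ∃! X : Matrix (Fin n) (Fin n) ℝ, X.IsSymm ∧ α • X - L X = Y) ∧
    (∀ X Y : Matrix (Fin n) (Fin n) ℝ, X.IsSymm → α • X - L X = Y → Y.PosSemidef →
      X.PosSemidef)

open Filter Topology Metric

theorem tendsto_atTop_of_eventually_smul_sub_apply_eq_smul {E : Type*} [NormedAddCommGroup E]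
    [NormedSpace ℝ E] (L : E →L[ℝ] E) {x : E} {y : ℝ → E}
    (hy : ∀ᶠ α in atTop, α • y α - L (y α) = α • x) : Tendsto y atTop (𝓝 x) := by
  rw [tendsto_iff_norm_sub_tendsto_zero]
  have hlim : Tendsto (fun α : ℝ => 2 * ‖L‖ * ‖x‖ / α) atTop (𝓝 0) :=
    tendsto_const_nhds.div_atTop tendsto_id
  refine squeeze_zero' (.of_forall fun _ => norm_nonneg _) ?_ hlim
  filter_upwards [hy, eventually_gt_atTop 0, eventually_ge_atTop (2 * ‖L‖)]
    with α hα hpos hlarge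
  have hdiff : α • (y α - x) = L (y α) := by
    rw [smul_sub]; linear_combination (norm := module) hα
  have hbound : α * ‖y α - x‖ ≤ ‖L‖ * (‖x‖ + ‖y α - x‖) :=
    calc α * ‖y α - x‖ = ‖L (y α)‖ := by
          rw [← hdiff, norm_smul, Real.norm_of_nonneg hpos.le]
      _ ≤ ‖L‖ * ‖y α‖ := L.le_opNorm _
      _ ≤ ‖L‖ * (‖x‖ + ‖y α - x‖) := by
          gcongr; simpa using norm_add_le x (y α - x)
  rw [le_div_iff₀ hpos]
  nlinarith [norm_nonneg L, norm_nonneg x, norm_nonneg (y α - x)]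

def CrossPositive {ι : Type*} [Fintype ι] (L : Matrix ι ι ℝ → Matrix ι ι ℝ) : Prop :=
  ∀ ⦃X : Matrix ι ι ℝ⦄ ⦃v : ι → ℝ⦄, X.PosSemidef → v ⬝ᵥ X *ᵥ v = 0 →
    0 ≤ v ⬝ᵥ L X *ᵥ v

section MatrixNorm

attribute [local instance] Matrix.normedAddCommGroup Matrix.normedSpace

theorem ResolventPositive.crossPositive {n : ℕ}
    {L : Matrix (Fin n) (Fin n) ℝ →ₗ[ℝ] Matrix (Fin n) (Fin n) ℝ}
    (hL : ResolventPositive (fun M => L M)) : CrossPositive (fun M => L M) := by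
  intro X v hX hv
  obtain ⟨α₀, hα₀⟩ := hL
  have hXsymm : X.IsSymm := isHermitian_iff_isSymm.mp hX.isHermitian
  -- `R α = α (α - L)⁻¹ X`
  have hR : ∀ α, ∃ R : Matrix (Fin n) (Fin n) ℝ, max α₀ 0 < α →
      R.PosSemidef ∧ α • R - L R = α • X := by
    intro α
    by_cases hα : max α₀ 0 < α
    · obtain ⟨hbij, hpos⟩ := hα₀ α (max_lt_iff.mp hα).1
      obtain ⟨R, ⟨hRsymm, hReq⟩, -⟩ := hbij (α • X) (hXsymm.smul α)
      exact ⟨R, fun _ => ⟨hpos R _ hRsymm hReq (hX.smul (max_lt_iff.mp hα).2.le), hReq⟩⟩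
    · exact ⟨0, fun h => absurd h hα⟩
  choose R hR using hR
  have hlim : Tendsto R atTop (𝓝 X) := by
    refine tendsto_atTop_of_eventually_smul_sub_apply_eq_smul
      (LinearMap.toContinuousLinearMap L) ?_
    filter_upwards [eventually_gt_atTop (max α₀ 0)] with α hα
    simpa using (hR α hα).2
  have hcont : Continuous fun M => v ⬝ᵥ L M *ᵥ v :=
    continuous_const.dotProduct
      ((LinearMap.continuous_of_finiteDimensional L).matrix_mulVec continuous_const)
  refine ge_of_tendsto ((hcont.tendsto X).comp hlim) ?_
  filter_upwards [eventually_gt_atTop (max α₀ 0)] with α hα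
  obtain ⟨hRpsd, hReq⟩ := hR α hα
  have hq := congrArg (fun M => v ⬝ᵥ M *ᵥ v) hReq
  simp only [sub_mulVec, smul_mulVec, dotProduct_sub, dotProduct_smul, smul_eq_mul, hv,
    mul_zero, sub_eq_zero] at hq
  have hRv : 0 ≤ v ⬝ᵥ R α *ᵥ v := by simpa using hRpsd.dotProduct_mulVec_nonneg v
  simpa [← hq] using mul_nonneg (max_lt_iff.mp hα).2.le hRv

end MatrixNorm

theorem Matrix.IsHermitian.posDef_iff_forall_mem_sphere {ι : Type*} [Fintype ι]
    {M : Matrix ι ι ℝ} (hM : M.IsHermitian) :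
    M.PosDef ↔ ∀ u ∈ sphere (0 : ι → ℝ) 1, 0 < u ⬝ᵥ M *ᵥ u := by
  refine ⟨fun h u hu => ?_, fun h => .of_dotProduct_mulVec_pos hM fun x hx => ?_⟩
  · simpa using h.dotProduct_mulVec_pos (ne_zero_of_mem_unit_sphere ⟨u, hu⟩)
  have hx' : 0 < ‖x‖ := norm_pos_iff.mpr hx
  have hu := h (‖x‖⁻¹ • x) (by simp [norm_smul, hx'.ne'])
  simp only [mulVec_smul, dotProduct_smul, smul_dotProduct, smul_eq_mul] at hu
  simpa using pos_of_mul_pos_right (pos_of_mul_pos_right hu (by positivity)) (by positivity)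

theorem Matrix.isClosed_setOf_posSemidef {ι : Type*} [Fintype ι] :
    IsClosed {M : Matrix ι ι ℝ | M.PosSemidef} := by
  have : {M : Matrix ι ι ℝ | M.PosSemidef} =
      {M | Mᴴ = M} ∩ ⋂ x : ι → ℝ, {M | 0 ≤ x ⬝ᵥ M *ᵥ x} := by
    ext M; simp [posSemidef_iff_dotProduct_mulVec, IsHermitian]
  rw [this]
  exact (isClosed_eq continuous_id.matrix_conjTranspose continuous_id).inter
    (isClosed_iInter fun x => isClosed_le continuous_const
      (continuous_const.dotProduct (continuous_id.matrix_mulVec continuous_const)))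

theorem IsCompact.setOf_exists_mem_nonpos {X Y : Type*} [TopologicalSpace X] [T2Space X]
    [TopologicalSpace Y] [T2Space Y] {s : Set X} {K : Set Y} (hs : IsCompact s)
    (hK : IsCompact K) {g : X × Y → ℝ} (hg : ContinuousOn g (s ×ˢ K)) :
    IsCompact {x | x ∈ s ∧ ∃ y ∈ K, g (x, y) ≤ 0} := by
  have hclosed := hg.preimage_isClosed_of_isClosed (hs.prod hK).isClosed (isClosed_Iic (a := 0))
  convert ((hs.prod hK).of_isClosed_subset hclosed inter_subset_left).image continuous_fst
  ext x
  simp [and_assoc]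

theorem IsLocalMinOn.hasDerivWithinAt_nonpos_of_Icc {f : ℝ → ℝ} {a b f' : ℝ} (hab : a < b)
    (hmin : IsLocalMinOn f (Icc a b) b) (hf : HasDerivWithinAt f f' (Icc a b) b) : f' ≤ 0 := by
  have hdir : a - b ∈ posTangentConeAt (Icc a b) b :=
    mem_posTangentConeAt_of_segment_subset (by
      rw [add_sub_cancel, segment_symm]; exact segment_subset_Icc hab.le)
  have := hmin.hasFDerivWithinAt_nonneg hf.hasFDerivWithinAt hdir
  simp only [ContinuousLinearMap.toSpanSingleton_apply, smul_eq_mul] at this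
  exact nonpos_of_mul_nonneg_right this (sub_neg.mpr hab)

theorem HasDerivWithinAt.dotProduct_mulVec {ι : Type*} [Fintype ι] {Y : ℝ → Matrix ι ι ℝ}
    {Y' : Matrix ι ι ℝ} {s : Set ℝ} {t : ℝ}
    (hY : ∀ i j, HasDerivWithinAt (fun r => Y r i j) (Y' i j) s t) (x : ι → ℝ) :
    HasDerivWithinAt (fun r => x ⬝ᵥ Y r *ᵥ x) (x ⬝ᵥ Y' *ᵥ x) s t := by
  simp only [dotProduct, mulVec]
  exact .fun_sum fun i _ =>
    (HasDerivWithinAt.fun_sum fun j _ => (hY i j).mul_const (x j)).const_mul (x i)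

theorem ContinuousOn.exists_first_not_posDef {ι : Type*} [Fintype ι] {Y : ℝ → Matrix ι ι ℝ}
    {a b : ℝ} (hY : ContinuousOn Y (Icc a b)) (hherm : ∀ t ∈ Icc a b, (Y t).IsHermitian)
    (ha : (Y a).PosDef) {t : ℝ} (ht : t ∈ Icc a b) (hbad : ¬ (Y t).PosDef) :
    ∃ t₁ ∈ Ioc a b, (∀ s ∈ Icc a t₁, (Y s).PosSemidef) ∧
      ∃ v ≠ 0, v ⬝ᵥ Y t₁ *ᵥ v = 0 := by
  have hquad : ContinuousOn (fun p : ℝ × (ι → ℝ) => p.2 ⬝ᵥ Y p.1 *ᵥ p.2)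
      (Icc a b ×ˢ sphere 0 1) :=
    (continuous_snd.dotProduct (continuous_fst.matrix_mulVec continuous_snd)).comp_continuousOn
      ((hY.comp continuousOn_fst fun _ hp => hp.1).prodMk continuousOn_snd)
  set S := {s | s ∈ Icc a b ∧ ∃ u ∈ sphere (0 : ι → ℝ) 1, u ⬝ᵥ Y s *ᵥ u ≤ 0}
  have hmem_S : ∀ s ∈ Icc a b, s ∈ S ↔ ¬ (Y s).PosDef := fun s hs => by
    simp only [S, mem_ofPred_eq, and_iff_right hs, not_forall, not_lt, exists_prop,
      (hherm s hs).posDef_iff_forall_mem_sphere]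
  obtain ⟨t₁, ⟨ht₁, v, hv, hvY⟩, ht₁_least⟩ :=
    (isCompact_Icc.setOf_exists_mem_nonpos (isCompact_sphere 0 1) hquad).exists_isLeast
      ⟨t, (hmem_S t ht).mpr hbad⟩
  have hat₁ : a < t₁ :=
    ht₁.1.lt_of_ne fun h => (hmem_S t₁ ht₁).mp ⟨ht₁, v, hv, hvY⟩ (h ▸ ha)
  have hsub : Icc a t₁ ⊆ Icc a b := Icc_subset_Icc_right ht₁.2
  have hbefore : ∀ s ∈ Ico a t₁, (Y s).PosDef := fun s hs => by
    by_contra h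
    exact (ht₁_least ((hmem_S s (hsub (Ico_subset_Icc_self hs))).mpr h)).not_gt hs.2
  have hPSD : (Y t₁).PosSemidef := by
    have := right_nhdsWithin_Ico_neBot hat₁
    exact isClosed_setOf_posSemidef.mem_of_tendsto
      ((hY t₁ ht₁).mono (Ico_subset_Icc_self.trans hsub)).tendsto
      (eventually_nhdsWithin_of_forall fun s hs => (hbefore s hs).posSemidef)
  refine ⟨t₁, ⟨hat₁, ht₁.2⟩, fun s hs => ?_, v, ne_zero_of_mem_unit_sphere ⟨v, hv⟩,
    hvY.antisymm (by simpa using hPSD.dotProduct_mulVec_nonneg v)⟩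
  rcases hs.2.lt_or_eq with hlt | rfl
  · exact (hbefore s ⟨hs.1, hlt⟩).posSemidef
  · exact hPSD

theorem posdef_propagation_of_resolvent_positive_general {n : ℕ}
    (L : Matrix (Fin n) (Fin n) ℝ →ₗ[ℝ] Matrix (Fin n) (Fin n) ℝ)
    (hLres : ResolventPositive (fun M => L M))
    (T : ℝ)
    (Y Y' : ℝ → Matrix (Fin n) (Fin n) ℝ)
    (hYsymm : ∀ t ∈ Icc (0 : ℝ) T, (Y t).IsSymm)
    (hYderiv : ∀ t ∈ Icc (0 : ℝ) T, ∀ i j,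
      HasDerivWithinAt (fun s => Y s i j) (Y' t i j) (Icc (0 : ℝ) T) t)
    (h0 : (Y 0).PosDef)
    (hineq : ∀ t ∈ Icc (0 : ℝ) T, (Y' t - L (Y t)).PosDef) :
    ∀ t ∈ Icc (0 : ℝ) T, (Y t).PosDef := by
  intro t ht
  by_contra hbad
  have hYcont : ContinuousOn Y (Icc 0 T) := fun s hs => continuousWithinAt_pi.mpr fun i =>
    continuousWithinAt_pi.mpr fun j => (hYderiv s hs i j).continuousWithinAt
  obtain ⟨t₁, ht₁, hPSD, v, hv, hvY⟩ := hYcont.exists_first_not_posDef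
    (fun s hs => isHermitian_iff_isSymm.mpr (hYsymm s hs)) h0 ht hbad
  have hsub : Icc 0 t₁ ⊆ Icc 0 T := Icc_subset_Icc_right ht₁.2
  have ht₁_mem : t₁ ∈ Icc 0 t₁ := right_mem_Icc.mpr ht₁.1.le
  have hLv : 0 ≤ v ⬝ᵥ L (Y t₁) *ᵥ v := hLres.crossPositive (hPSD t₁ ht₁_mem) hvY
  have hY'v_pos : 0 < v ⬝ᵥ Y' t₁ *ᵥ v := by
    have := (hineq t₁ (hsub ht₁_mem)).dotProduct_mulVec_pos hv
    rw [star_trivial, sub_mulVec, dotProduct_sub] at this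
    linarith
  have hmin : IsLocalMinOn (fun r => v ⬝ᵥ Y r *ᵥ v) (Icc 0 t₁) t₁ :=
    IsMinOn.localize <| isMinOn_iff.mpr fun s hs => by
      simpa [hvY] using (hPSD s hs).dotProduct_mulVec_nonneg v
  have hY'v_nonpos := hmin.hasDerivWithinAt_nonpos_of_Icc ht₁.1 <|
    .dotProduct_mulVec (fun i j => (hYderiv t₁ (hsub ht₁_mem) i j).mono hsub) v
  linarith

/-- If `Y(0)` is positive definite and `Y'(t) - L(Y(t))` is positive definite on `[0, T]`
for a resolvent positive operator `L`, then `Y(t)` is positive definite on `[0, T]`. -/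
theorem posdef_propagation_of_resolvent_positive {n : ℕ}
    (L : Matrix (Fin n) (Fin n) ℝ →ₗ[ℝ] Matrix (Fin n) (Fin n) ℝ)
    (hLsymm : ∀ M : Matrix (Fin n) (Fin n) ℝ, M.IsSymm → (L M).IsSymm)
    (hLres : ResolventPositive (fun M => L M))
    (T : ℝ) (hT : 0 < T)
    (Y Y' : ℝ → Matrix (Fin n) (Fin n) ℝ)
    (hYsymm : ∀ t ∈ Icc (0 : ℝ) T, (Y t).IsSymm)
    (hYderiv : ∀ t ∈ Icc (0 : ℝ) T, ∀ i j,
      HasDerivWithinAt (fun s => Y s i j) (Y' t i j) (Icc (0 : ℝ) T) t)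
    (h0 : (Y 0).PosDef)
    (hineq : ∀ t ∈ Icc (0 : ℝ) T, (Y' t - L (Y t)).PosDef) :
    ∀ t ∈ Icc (0 : ℝ) T, (Y t).PosDef :=
  posdef_propagation_of_resolvent_positive_general L hLres T Y Y' hYsymm hYderiv h0 hineq
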